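/- Every strategy σ on a justified AJM game A has a skeleton; moreover, for every s ∈ σ, σ has a skeleton containing s. -/

import Mathlib

/- Justified AJM games, after Abramsky's game semantics for access control. -/

namespace AJM

inductive Pol where
  | P
  | O
deriving DecidableEq

inductive QA where
  | Q
  | Ans
deriving DecidableEq

def Pol.flip : Pol → Pol
  | .P => .O
  | .O => .P

/-- Well-bracketed strings over moves (condition (p4)). -/
inductive WB {M : Type} (lab : M → Pol × QA) (just : M → Option M) : List M → Prop
  | nil : WB lab just []
  | wrap (a q : M) (u : List M) : (lab a).2 = QA.Ans → just a = some q →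
      WB lab just u → WB lab just (q :: (u ++ [a]))
  | append (u v : List M) : WB lab just u → WB lab just v → WB lab just (u ++ v)

/-- Conditions (p1)–(p5): Opponent starts, alternation, linearity,
well-bracketing, justifiers occur before their moves. -/
def ValidSeq {M : Type} (lab : M → Pol × QA) (just : M → Option M) (s : List M) : Prop :=
  (∀ m, s.head? = some m → (lab m).1 = Pol.O) ∧
  List.Chain' (fun m m' => (lab m).1 ≠ (lab m').1) s ∧
  s.Nodup ∧
  (∃ t, s <+: t ∧ WB lab just t) ∧
  (∀ s₁ m s₂, s = s₁ ++ m :: s₂ → ∀ m', just m = some m' → m' ∈ s₁)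

/-- A justified AJM game (the data). -/
structure Game where
  M : Type
  lab : M → Pol × QA
  just : M → Option M
  pos : Set (List M)
  equiv : List M → List M → Prop

namespace Game

/-- The axioms making the data of a `Game` an actual justified AJM game. -/
structure Valid (A : Game) : Prop where
  just_wf : WellFounded fun m m' : A.M => A.just m' = some m
  just_pol : ∀ m m', A.just m = some m' → (A.lab m).1 ≠ (A.lab m').1
  just_qa : ∀ m m', A.just m = some m' → (A.lab m).2 = QA.Ans → (A.lab m').2 = QA.Q
  ans_justified : ∀ m, (A.lab m).2 = QA.Ans → A.just m ≠ none
  pos_nonempty : A.pos.Nonempty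
  pos_prefix_closed : ∀ s t : List A.M, s <+: t → t ∈ A.pos → s ∈ A.pos
  pos_valid : ∀ s ∈ A.pos, ValidSeq A.lab A.just s
  equiv_mem : ∀ s t, A.equiv s t → s ∈ A.pos ∧ t ∈ A.pos
  equiv_refl : ∀ s ∈ A.pos, A.equiv s s
  equiv_symm : ∀ s t, A.equiv s t → A.equiv t s
  equiv_trans : ∀ s t u, A.equiv s t → A.equiv t u → A.equiv s u
  equiv_lab : ∀ s t, A.equiv s t → s.map A.lab = t.map A.lab
  equiv_prefix : ∀ s t s' t', A.equiv s t → s' <+: s → t' <+: t →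
      s'.length = t'.length → A.equiv s' t'
  equiv_ext : ∀ s t a, A.equiv s t → s ++ [a] ∈ A.pos → ∃ b, A.equiv (s ++ [a]) (t ++ [b])

/-- A strategy on a game: a non-empty set of even-length positions that is
causally consistent, representation independent and deterministic. -/
structure IsStrategy (A : Game) (σ : Set (List A.M)) : Prop where
  subset_pos : σ ⊆ A.pos
  even_length : ∀ s ∈ σ, Even s.length
  nonempty : σ.Nonempty
  causal : ∀ s a b, s ++ [a, b] ∈ σ → s ∈ σ
  repind : ∀ s t, s ∈ σ → A.equiv s t → t ∈ σ
  det : ∀ s t a b a' b', s ++ [a, b] ∈ σ → t ++ [a', b'] ∈ σ →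
      A.equiv (s ++ [a]) (t ++ [a']) → A.equiv (s ++ [a, b]) (t ++ [a', b'])

/-- A skeleton of a strategy `σ`: a non-empty, causally consistent subset of
`σ` satisfying Uniformization. -/
structure IsSkeletonOf (A : Game) (φ σ : Set (List A.M)) : Prop where
  nonempty : φ.Nonempty
  subset : φ ⊆ σ
  causal : ∀ s a b, s ++ [a, b] ∈ φ → s ∈ φ
  uniformization : ∀ s a b, s ++ [a, b] ∈ σ → s ∈ φ → ∃! b', s ++ [a, b'] ∈ φ

/-- A skeleton in the abstract sense (independently of any strategy):
a non-empty, causally consistent set of even-length positions satisfying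
Functional Determinacy and Functional Representation Independence. -/
structure IsSkeleton (A : Game) (φ : Set (List A.M)) : Prop where
  subset_pos : φ ⊆ A.pos
  even_length : ∀ s ∈ φ, Even s.length
  nonempty : φ.Nonempty
  causal : ∀ s a b, s ++ [a, b] ∈ φ → s ∈ φ
  funDet : ∀ s a b c, s ++ [a, b] ∈ φ → s ++ [a, c] ∈ φ → b = c
  funRepInd : ∀ s t a b a', s ++ [a, b] ∈ φ → t ∈ φ →
      A.equiv (s ++ [a]) (t ++ [a']) →
      ∃! b', t ++ [a', b'] ∈ φ ∧ A.equiv (s ++ [a, b]) (t ++ [a', b'])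

/-- `φ• = { t | ∃ s ∈ φ, s ≈_A t }`, the saturation of `φ` under `≈_A`. -/
def dot (A : Game) (φ : Set (List A.M)) : Set (List A.M) :=
  {t | ∃ s ∈ φ, A.equiv s t}

/-- The preorder `φ ⊑ ψ` on skeletons. -/
def Subeq (A : Game) (φ ψ : Set (List A.M)) : Prop :=
  ∀ s a b s' a', s ++ [a, b] ∈ φ → s' ∈ ψ → A.equiv (s ++ [a]) (s' ++ [a']) →
    ∃ b', s' ++ [a', b'] ∈ ψ ∧ A.equiv (s ++ [a, b]) (s' ++ [a', b'])

end Game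

end AJM

/-! Fix a play `s₀ ∈ σ` and a function `g` answering every Opponent move `a` after an even
play `s` by some `b` with `s ++ [a, b] ∈ σ` whenever σ answers at all, choosing the answer
that continues `s₀` when `s ++ [a]` is a prefix of `s₀`. The plays of σ built by answering
with `g` throughout form a skeleton of σ, and it contains `s₀` since σ is closed under
even-length prefixes. -/

namespace AJM

variable {M : Type}

theorem evenLength_induction {p : List M → Prop} (nil : p [])
    (snoc : ∀ s a b, Even s.length → p s → p (s ++ [a, b])) :
    ∀ s : List M, Even s.length → p s := by
  rintro s ⟨n, hn⟩
  induction n generalizing s with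
  | zero => simp_all
  | succ n ih =>
    obtain ⟨a, b, hab⟩ := List.length_eq_two.mp (show (s.drop (2 * n)).length = 2 by simp; omega)
    have hs : s = s.take (2 * n) ++ [a, b] := by rw [← hab, List.take_append_drop]
    have hlen : (s.take (2 * n)).length = n + n := by simp; omega
    rw [hs]
    exact snoc _ a b ⟨n, hlen⟩ (ih _ hlen)

theorem eq_of_append_pair_prefix {s s₀ : List M} {a b b' : M} (h : s ++ [a, b] <+: s₀)
    (h' : s ++ [a, b'] <+: s₀) : b = b' := by
  rw [List.prefix_iff_eq_take] at h h'
  have : s ++ [a, b] = s ++ [a, b'] := h.trans (by simpa using h'.symm)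
  simpa using this

inductive Follows (g : List M → M → M) : List M → Prop
  | nil : Follows g []
  | snoc {s : List M} (a : M) : Follows g s → Follows g (s ++ [a, g s a])

theorem Follows.of_append_pair {g : List M → M → M} {s : List M} {a b : M}
    (h : Follows g (s ++ [a, b])) : Follows g s ∧ b = g s a := by
  generalize ht : s ++ [a, b] = t at h
  cases h with
  | nil => simp at ht
  | snoc a' h =>
    obtain ⟨rfl, hab⟩ := List.append_inj' ht rfl
    simp only [List.cons.injEq, and_true] at hab
    exact ⟨h, hab.1 ▸ hab.2⟩

theorem exists_answer_through (σ : Set (List M)) (s₀ : List M) :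
    ∃ g : List M → M → M, (∀ s a b, s ++ [a, b] ∈ σ → s ++ [a, g s a] ∈ σ) ∧
      ∀ s a b, s ++ [a, b] <+: s₀ → s ++ [a, b] ∈ σ → g s a = b := by
  classical
  refine ⟨fun s a => if h : ∃ b, s ++ [a, b] <+: s₀ ∧ s ++ [a, b] ∈ σ then h.choose
    else if h' : ∃ b, s ++ [a, b] ∈ σ then h'.choose else a, ?_, ?_⟩
  · intro s a b hb
    have hex : ∃ b, s ++ [a, b] ∈ σ := ⟨b, hb⟩
    by_cases h : ∃ b, s ++ [a, b] <+: s₀ ∧ s ++ [a, b] ∈ σ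
    · simpa only [dif_pos h] using h.choose_spec.2
    · simpa only [dif_neg h, dif_pos hex] using hex.choose_spec
  · intro s a b hpre hb
    have h : ∃ b, s ++ [a, b] <+: s₀ ∧ s ++ [a, b] ∈ σ := ⟨b, hpre, hb⟩
    simp only [dif_pos h]
    exact eq_of_append_pair_prefix h.choose_spec.1 hpre

namespace Game

variable {A : Game} {σ : Set (List A.M)}

theorem IsStrategy.mem_of_prefix (hσ : IsStrategy A σ) {u s : List A.M} (hus : u <+: s)
    (hs : s ∈ σ) (hu : Even u.length) : u ∈ σ := by
  obtain ⟨v, rfl⟩ := hus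
  have hv : Even v.length := by
    have := hσ.even_length _ hs
    rw [List.length_append, Nat.even_add] at this
    exact this.mp hu
  revert hs
  refine evenLength_induction (p := fun v => u ++ v ∈ σ → u ∈ σ) (by simp) ?_ v hv
  intro w a b _ ih hw
  exact ih (hσ.causal _ a b (by simpa using hw))

theorem IsStrategy.nil_mem (hσ : IsStrategy A σ) : [] ∈ σ :=
  let ⟨s, hs⟩ := hσ.nonempty
  hσ.mem_of_prefix s.nil_prefix hs (by simp)

theorem isSkeletonOf_follows (hσ : IsStrategy A σ) {g : List A.M → A.M → A.M}
    (hg : ∀ s a b, s ++ [a, b] ∈ σ → s ++ [a, g s a] ∈ σ) :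
    IsSkeletonOf A {t | t ∈ σ ∧ Follows g t} σ where
  nonempty := ⟨[], hσ.nil_mem, .nil⟩
  subset _ ht := ht.1
  causal s a b h := ⟨hσ.causal s a b h.1, h.2.of_append_pair.1⟩
  uniformization s a b hb hs :=
    ⟨g s a, ⟨hg s a b hb, hs.2.snoc a⟩, fun _ h => h.2.of_append_pair.2⟩

theorem exists_isSkeletonOf_mem (hσ : IsStrategy A σ) {s₀ : List A.M} (hs₀ : s₀ ∈ σ) :
    ∃ φ, IsSkeletonOf A φ σ ∧ s₀ ∈ φ := by
  obtain ⟨g, hg, hg₀⟩ := exists_answer_through σ s₀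
  have follows_prefix : ∀ u, Even u.length → u <+: s₀ → Follows g u := by
    refine evenLength_induction (by simp [Follows.nil]) ?_
    intro s a b hs ih hpre
    have hmem : s ++ [a, b] ∈ σ := hσ.mem_of_prefix hpre hs₀ (by simpa using hs.add even_two)
    rw [← hg₀ s a b hpre hmem]
    exact (ih ((s.prefix_append _).trans hpre)).snoc a
  exact ⟨_, isSkeletonOf_follows hσ hg,
    hs₀, follows_prefix s₀ (hσ.even_length s₀ hs₀) (List.prefix_refl s₀)⟩

end Game

end AJM

open AJM Game in
theorem exists_skeleton_general (A : Game)
    (σ : Set (List A.M)) (hσ : IsStrategy A σ) :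
    (∃ φ, IsSkeletonOf A φ σ) ∧ ∀ s ∈ σ, ∃ φ, IsSkeletonOf A φ σ ∧ s ∈ φ :=
  ⟨(exists_isSkeletonOf_mem hσ hσ.nil_mem).imp fun _ h => h.1,
    fun _ hs => exists_isSkeletonOf_mem hσ hs⟩

open AJM Game in
/-- Every strategy has a skeleton; moreover, for every play `s` of the
strategy there is a skeleton containing `s`. -/
theorem exists_skeleton (A : Game) (hA : A.Valid)
    (σ : Set (List A.M)) (hσ : IsStrategy A σ) :
    (∃ φ, IsSkeletonOf A φ σ) ∧ ∀ s ∈ σ, ∃ φ, IsSkeletonOf A φ σ ∧ s ∈ φ :=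
  exists_skeleton_general A σ hσ
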